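/- arXiv:2303.09511 — 4 statements merged into one kernel-verified Lean document; each statement's English description precedes it below -/
import Mathlib

section
/- The DRS splitting of a vector is weight-preserving and sum-preserving: for any positive integer threshold w and any vector v ∈ 𝔽₂^{2ⁿ}, the DRS algorithm applied to (w, v) terminates, every output vector has Hamming weight at most w (and at least 1), and the outputs sum to v over 𝔽₂ (indeed their supports partition the support of v). -/
def wtH (l : List (ZMod 2)) : ℕ := l.countP (fun a => a ≠ 0)

def drs (w : ℕ) : ℕ → List (ZMod 2) → List (List (ZMod 2))
  | 0, x => if wtH x = 0 then [] else [x]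
  | n + 1, x =>
      if wtH x = 0 then []
      else if wtH x ≤ w then [x]
      else ((drs w n (x.take (2 ^ n))).map (fun y => y ++ List.replicate (2 ^ n) 0)) ++
           ((drs w n (x.drop (2 ^ n))).map (fun y => List.replicate (2 ^ n) (0 : ZMod 2) ++ y))

/-!
Induction along the recursion of `drs`. A vector that is returned unsplit has weight in `[1, w]`
(for `n = 0` because its length is `1 ≤ w`), and a zero vector contributes nothing. In the
splitting step, zero-padding changes neither weights nor the coordinatewise sum of each half,
while it places the outputs of the two halves on the disjoint index ranges `[0, 2ⁿ)` and
`[2ⁿ, 2ⁿ⁺¹)`.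
-/

namespace List

variable {α : Type*}

theorem getD_append_replicate_self (y : List α) (d : α) (k i : ℕ) :
    (y ++ replicate k d).getD i d = y.getD i d := by
  grind

section Sum

variable [AddZeroClass α]

theorem zipWith_add_replicate_zero (l : List α) :
    zipWith (· + ·) l (replicate l.length 0) = l := by
  induction l with
  | nil => rfl
  | cons a l ih => simp [replicate_succ, ih]

theorem zipWith_add_replicate_zero_left (l : List α) :
    zipWith (· + ·) (replicate l.length 0) l = l := by
  induction l with
  | nil => rfl
  | cons a l ih => simp [replicate_succ, ih]

variable {m : ℕ} {L : List (List α)}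

theorem length_foldr_zipWith_add (hL : ∀ y ∈ L, y.length = m) {s : List α}
    (hs : s.length = m) : (L.foldr (fun y acc => zipWith (· + ·) y acc) s).length = m := by
  induction L with
  | nil => exact hs
  | cons a L ih =>
    simp only [foldr_cons, length_zipWith, hL a mem_cons_self,
      ih fun y hy => hL y (mem_cons_of_mem _ hy), min_self]

theorem foldr_zipWith_add_map_append_replicate (hL : ∀ y ∈ L, y.length = m) {s t : List α}
    {k : ℕ} (hs : s.length = m) (ht : t.length = k) :
    (L.map (· ++ replicate k 0)).foldr (fun y acc => zipWith (· + ·) y acc) (s ++ t) =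
      L.foldr (fun y acc => zipWith (· + ·) y acc) s ++ t := by
  induction L with
  | nil => rfl
  | cons a L ih =>
    have hL' : ∀ y ∈ L, y.length = m := fun y hy => hL y (mem_cons_of_mem _ hy)
    rw [map_cons, foldr_cons, ih hL', foldr_cons, zipWith_append, ← ht,
      zipWith_add_replicate_zero_left]
    rw [hL a mem_cons_self, length_foldr_zipWith_add hL' hs]

theorem foldr_zipWith_add_map_replicate_append {s t : List α} {k : ℕ} (hs : s.length = k) :
    (L.map (replicate k 0 ++ ·)).foldr (fun y acc => zipWith (· + ·) y acc) (s ++ t) =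
      s ++ L.foldr (fun y acc => zipWith (· + ·) y acc) t := by
  induction L with
  | nil => rfl
  | cons a L ih =>
    rw [map_cons, foldr_cons, ih, foldr_cons, ← hs, zipWith_append length_replicate,
      zipWith_add_replicate_zero_left]

end Sum

end List

section SuppDisjoint

variable {α : Type*} [Zero α]

def SuppDisjoint (y z : List α) : Prop :=
  ∀ i, y.getD i 0 = 0 ∨ z.getD i 0 = 0

theorem SuppDisjoint.append_replicate {y z : List α} (h : SuppDisjoint y z) (k : ℕ) :
    SuppDisjoint (y ++ List.replicate k 0) (z ++ List.replicate k 0) := by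
  simpa only [SuppDisjoint, List.getD_append_replicate_self] using h

theorem SuppDisjoint.replicate_append {y z : List α} (h : SuppDisjoint y z) (k : ℕ) :
    SuppDisjoint (List.replicate k 0 ++ y) (List.replicate k 0 ++ z) := by
  intro i
  rcases lt_or_ge i k with hi | hi
  · left
    rw [List.getD_append _ _ _ _ (by simpa using hi), List.getD_replicate _ hi]
  · have hk : (List.replicate k (0 : α)).length ≤ i := by simpa using hi
    rw [List.getD_append_right _ _ _ _ hk, List.getD_append_right _ _ _ _ hk,
      List.length_replicate]
    exact h (i - k)

theorem suppDisjoint_append_replicate_replicate_append {y : List α} (z : List α) (k : ℕ) :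
    SuppDisjoint (y ++ List.replicate k 0) (List.replicate y.length 0 ++ z) := by
  intro i
  rcases lt_or_ge i y.length with hi | hi
  · right
    rw [List.getD_append _ _ _ _ (by simpa using hi), List.getD_replicate _ hi]
  · left
    rw [List.getD_append_replicate_self, List.getD_eq_default _ _ hi]

end SuppDisjoint

theorem wtH_append (a b : List (ZMod 2)) : wtH (a ++ b) = wtH a + wtH b :=
  List.countP_append

theorem wtH_replicate_zero (k : ℕ) : wtH (List.replicate k 0) = 0 := by
  simp [wtH]

theorem wtH_le_length (v : List (ZMod 2)) : wtH v ≤ v.length :=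
  List.countP_le_length

theorem eq_replicate_zero_of_wtH_eq_zero {v : List (ZMod 2)} (h : wtH v = 0) :
    v = List.replicate v.length 0 :=
  List.eq_replicate_iff.mpr ⟨rfl, fun b hb => by
    simpa using List.countP_eq_zero.mp h b hb⟩

theorem length_take_two_pow {n : ℕ} {v : List (ZMod 2)} (hv : v.length = 2 ^ (n + 1)) :
    (v.take (2 ^ n)).length = 2 ^ n := by
  rw [List.length_take, hv, pow_succ]
  omega

theorem length_drop_two_pow {n : ℕ} {v : List (ZMod 2)} (hv : v.length = 2 ^ (n + 1)) :
    (v.drop (2 ^ n)).length = 2 ^ n := by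
  rw [List.length_drop, hv, pow_succ]
  omega

section DRS

variable {w n : ℕ} {x : List (ZMod 2)}

theorem length_of_mem_drs (hx : x.length = 2 ^ n) : ∀ y ∈ drs w n x, y.length = 2 ^ n := by
  fun_induction drs w n x with
  | case1 | case3 => simp
  | case2 | case4 => simpa
  | case5 n x _ _ ihl ihr =>
    simp only [List.mem_append, List.mem_map]
    rw [pow_succ, mul_two]
    rintro _ (⟨z, hz, rfl⟩ | ⟨z, hz, rfl⟩)
    · simp [ihl (length_take_two_pow hx) z hz]
    · simp [ihr (length_drop_two_pow hx) z hz]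

theorem wtH_of_mem_drs (hw : 1 ≤ w) (hx : x.length = 2 ^ n) :
    ∀ y ∈ drs w n x, 1 ≤ wtH y ∧ wtH y ≤ w := by
  fun_induction drs w n x with
  | case1 | case3 => simp
  | case2 x _ =>
    simp only [List.mem_singleton, forall_eq]
    have := wtH_le_length x
    simp only [pow_zero] at hx
    omega
  | case4 =>
    simp only [List.mem_singleton, forall_eq]
    omega
  | case5 n x _ _ ihl ihr =>
    simp only [List.mem_append, List.mem_map]
    rintro _ (⟨z, hz, rfl⟩ | ⟨z, hz, rfl⟩)
    · simpa [wtH_append, wtH_replicate_zero] using ihl (length_take_two_pow hx) z hz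
    · simpa [wtH_append, wtH_replicate_zero] using ihr (length_drop_two_pow hx) z hz

theorem foldr_zipWith_add_drs (hx : x.length = 2 ^ n) :
    (drs w n x).foldr (fun y acc => List.zipWith (· + ·) y acc) (List.replicate (2 ^ n) 0) =
      x := by
  fun_induction drs w n x with
  | case1 x hx0 | case3 n x hx0 =>
    rw [List.foldr_nil, ← hx, ← eq_replicate_zero_of_wtH_eq_zero hx0]
  | case2 x _ | case4 n x _ _ =>
    rw [List.foldr_cons, List.foldr_nil, ← hx, List.zipWith_add_replicate_zero]
  | case5 n x _ _ ihl ihr =>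
    have hl := length_take_two_pow hx
    have hr := length_drop_two_pow hx
    rw [pow_succ, mul_two, List.replicate_add, List.foldr_append,
      List.foldr_zipWith_add_map_replicate_append List.length_replicate, ihr hr,
      List.foldr_zipWith_add_map_append_replicate (length_of_mem_drs hl) List.length_replicate hr,
      ihl hl, List.take_append_drop]

theorem pairwise_suppDisjoint_drs (hx : x.length = 2 ^ n) :
    (drs w n x).Pairwise SuppDisjoint := by
  fun_induction drs w n x with
  | case1 | case3 => exact List.Pairwise.nil
  | case2 | case4 => exact List.pairwise_singleton _ _
  | case5 n x _ _ ihl ihr =>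
    refine List.pairwise_append.mpr ⟨?_, ?_, ?_⟩
    · exact List.pairwise_map.mpr ((ihl (length_take_two_pow hx)).imp (·.append_replicate _))
    · exact List.pairwise_map.mpr ((ihr (length_drop_two_pow hx)).imp (·.replicate_append _))
    · simp only [List.mem_map]
      rintro _ ⟨y, hy, rfl⟩ _ ⟨z, -, rfl⟩
      rw [← length_of_mem_drs (length_take_two_pow hx) y hy]
      exact suppDisjoint_append_replicate_replicate_append z _

end DRS

/-- The DRS splitting is weight- and sum-preserving: for threshold `w ≥ 1` and a
vector `v` of length `2^n`, every output vector has Hamming weight between `1` and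
`w`, the outputs sum to `v` over `𝔽₂`, and the supports of the outputs are pairwise
disjoint (so they partition the support of `v`). -/
theorem drs_weight_and_sum (w n : ℕ) (hw : 1 ≤ w) (v : List (ZMod 2))
    (hv : v.length = 2 ^ n) :
    (∀ y ∈ drs w n v, 1 ≤ wtH y ∧ wtH y ≤ w) ∧
    (drs w n v).foldr (fun y acc => List.zipWith (· + ·) y acc)
        (List.replicate (2 ^ n) (0 : ZMod 2)) = v ∧
    (drs w n v).Pairwise (fun y z => ∀ i : ℕ, y.getD i 0 = 0 ∨ z.getD i 0 = 0) :=
  ⟨wtH_of_mem_drs hw hv, foldr_zipWith_add_drs hv, pairwise_suppDisjoint_drs hv⟩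
end

section
/- Let u₁, u₂ be binary column vectors with equal Hamming weights such that for a given threshold w the DRS algorithm outputs the same number of vectors on inputs u₁ and u₂. Then the DRS algorithm also outputs the same number of vectors on inputs u₁ ⊗ [1,1]ᵀ and u₂ ⊗ [1,1]ᵀ, and on inputs u₁ ⊗ [0,1]ᵀ and u₂ ⊗ [0,1]ᵀ. -/
theorem length_drs_succ_append (w n : ℕ) {a : List (ZMod 2)} (ha : a.length = 2 ^ n)
    (b : List (ZMod 2)) :
    (drs w (n + 1) (a ++ b)).length =
      if wtH a + wtH b = 0 then 0
      else if wtH a + wtH b ≤ w then 1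
      else (drs w n a).length + (drs w n b).length := by
  simp only [drs, wtH_append, List.take_left' ha, List.drop_left' ha]
  split_ifs <;> simp

theorem length_drs_succ_append_congr (w n : ℕ) {a₁ a₂ b₁ b₂ : List (ZMod 2)}
    (ha₁ : a₁.length = 2 ^ n) (ha₂ : a₂.length = 2 ^ n)
    (hw : wtH a₁ + wtH b₁ = wtH a₂ + wtH b₂)
    (hca : (drs w n a₁).length = (drs w n a₂).length)
    (hcb : (drs w n b₁).length = (drs w n b₂).length) :
    (drs w (n + 1) (a₁ ++ b₁)).length = (drs w (n + 1) (a₂ ++ b₂)).length := by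
  rw [length_drs_succ_append w n ha₁, length_drs_succ_append w n ha₂, hw, hca, hcb]

/-- If `u₁, u₂` have equal length `2^n`, equal Hamming weight, and the DRS algorithm
outputs the same number of vectors on them, then it also outputs the same number of
vectors on `u₁ ⊗ [1,1]ᵀ = (u₁, u₁)` and `u₂ ⊗ [1,1]ᵀ`, and on
`u₁ ⊗ [0,1]ᵀ = (0, u₁)` and `u₂ ⊗ [0,1]ᵀ`. -/
theorem drs_count_kron_step (w n : ℕ) (u₁ u₂ : List (ZMod 2))
    (h₁ : u₁.length = 2 ^ n) (h₂ : u₂.length = 2 ^ n)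
    (hw : wtH u₁ = wtH u₂)
    (hcount : (drs w n u₁).length = (drs w n u₂).length) :
    (drs w (n + 1) (u₁ ++ u₁)).length = (drs w (n + 1) (u₂ ++ u₂)).length ∧
    (drs w (n + 1) (List.replicate (2 ^ n) (0 : ZMod 2) ++ u₁)).length =
      (drs w (n + 1) (List.replicate (2 ^ n) (0 : ZMod 2) ++ u₂)).length := by
  have hrep : (List.replicate (2 ^ n) (0 : ZMod 2)).length = 2 ^ n := List.length_replicate
  exact ⟨length_drs_succ_append_congr w n h₁ h₂ (by rw [hw]) hcount hcount,
    length_drs_succ_append_congr w n hrep hrep (by rw [hw]) rfl hcount⟩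
end

section
/- Let λ > λ* := h_b(2/3) − 1/3, where h_b is the binary entropy function. With threshold w = 2^{⌈nλ⌉}, the quantity γₙ := (1/2ⁿ) Σ_{i=0}^{n} C(n,i)·n_DRS(u_i) − 1 = (1/2ⁿ) Σ_{i>⌈nλ⌉} C(n,i)·(2^{i−⌈nλ⌉} − 1) tends to 0 as n → ∞, and in fact decays exponentially in n. -/
open Filter Finset

/-- The binary entropy function. -/
noncomputable def hb (p : ℝ) : ℝ := -p * Real.logb 2 p - (1 - p) * Real.logb 2 (1 - p)

/-- The multiplicative rate loss `γₙ` of the DRS algorithm with threshold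
`w = 2^{⌈nλ⌉}` applied to `G₂^{⊗n}`:
`γₙ = (1/2ⁿ) Σ_{i=0}^{n} C(n,i)·n_DRS(u_i) − 1`, where `n_DRS(u_i) = 1` for
`i ≤ ⌈nλ⌉` and `2^{i−⌈nλ⌉}` otherwise. -/
noncomputable def gammaDRS (lam : ℝ) (n : ℕ) : ℝ :=
  (1 / 2 ^ n) * ∑ i ∈ Finset.range (n + 1),
    (n.choose i : ℝ) *
      (if i ≤ ⌈(n : ℝ) * lam⌉₊ then 1 else 2 ^ (i - ⌈(n : ℝ) * lam⌉₊)) - 1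

/-!
With `m = ⌈nλ⌉`, each tail term `C(n,i)(2^{i-m} - 1)` is at most `C(n,i) 2^i / 2^m`, and summing
over all `i` gives `γₙ ≤ 3ⁿ / 2^{n+m} ≤ 2^{-(λ - (log₂ 3 - 1)) n}`. The binomial theorem thus
replaces the entropy estimate `C(n, αn) ≤ 2^{n h_b(α)}`: indeed `max_α (h_b(α) + α) = log₂ 3` is
attained at `α = 2/3`, so `λ* = h_b(2/3) - 1/3 = log₂ 3 - 1`.
-/

open Real Topology

lemma hb_two_thirds_sub_one_third : hb (2 / 3) - 1 / 3 = logb 2 3 - 1 := by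
  have h2 : logb 2 2 = 1 := logb_self_eq_one (by norm_num)
  have h23 : logb 2 (2 / 3) = 1 - logb 2 3 := by
    rw [logb_div (by norm_num) (by norm_num), h2]
  have h13 : logb 2 (1 - 2 / 3) = -logb 2 3 := by
    rw [show (1 : ℝ) - 2 / 3 = 3⁻¹ by norm_num, logb_inv]
  rw [hb, h23, h13]
  ring

lemma gammaDRS_eq_sum_filter (lam : ℝ) (n : ℕ) :
    gammaDRS lam n =
      (1 / 2 ^ n) * ∑ i ∈ (range (n + 1)).filter (fun i => ⌈(n : ℝ) * lam⌉₊ < i),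
        (n.choose i : ℝ) * (2 ^ (i - ⌈(n : ℝ) * lam⌉₊) - 1) := by
  set m := ⌈(n : ℝ) * lam⌉₊
  have hsplit : ∀ i ∈ range (n + 1),
      (n.choose i : ℝ) * (if i ≤ m then 1 else 2 ^ (i - m)) =
        n.choose i + if m < i then (n.choose i : ℝ) * (2 ^ (i - m) - 1) else 0 := by
    intro i _
    by_cases h : i ≤ m
    · simp [h, Nat.not_lt.2 h]
    · rw [if_neg h, if_pos (Nat.lt_of_not_le h)]
      ring
  have hchoose : ∑ i ∈ range (n + 1), (n.choose i : ℝ) = 2 ^ n := by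
    exact_mod_cast Nat.sum_range_choose n
  rw [gammaDRS, sum_congr rfl hsplit, sum_add_distrib, ← sum_filter, hchoose]
  field_simp
  ring

lemma gammaDRS_nonneg (lam : ℝ) (n : ℕ) : 0 ≤ gammaDRS lam n := by
  rw [gammaDRS_eq_sum_filter]
  refine mul_nonneg (by positivity) (sum_nonneg fun i _ => mul_nonneg (by positivity) ?_)
  exact sub_nonneg.2 (one_le_pow₀ one_le_two)

lemma sum_choose_mul_two_pow_sub_one_le (n m : ℕ) :
    ∑ i ∈ (range (n + 1)).filter (fun i => m < i), (n.choose i : ℝ) * (2 ^ (i - m) - 1) ≤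
      3 ^ n / 2 ^ m := by
  have hbinom : ∑ i ∈ range (n + 1), (n.choose i : ℝ) * 2 ^ i = 3 ^ n := by
    have := (add_pow (2 : ℝ) 1 n).symm
    norm_num at this
    rw [← this]
    exact sum_congr rfl fun i _ => mul_comm _ _
  calc ∑ i ∈ (range (n + 1)).filter (fun i => m < i), (n.choose i : ℝ) * (2 ^ (i - m) - 1)
      ≤ ∑ i ∈ (range (n + 1)).filter (fun i => m < i), (n.choose i : ℝ) * 2 ^ i / 2 ^ m := by
        refine sum_le_sum fun i hi => ?_
        rw [mul_div_assoc, div_eq_mul_inv, ← pow_sub₀ _ two_ne_zero (mem_filter.1 hi).2.le]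
        exact mul_le_mul_of_nonneg_left (sub_le_self _ zero_le_one) (by positivity)
    _ ≤ ∑ i ∈ range (n + 1), (n.choose i : ℝ) * 2 ^ i / 2 ^ m :=
        sum_le_sum_of_subset_of_nonneg (filter_subset _ _) fun _ _ _ => by positivity
    _ = 3 ^ n / 2 ^ m := by rw [← sum_div, hbinom]

lemma gammaDRS_le_two_rpow (lam : ℝ) (n : ℕ) :
    gammaDRS lam n ≤ (2 : ℝ) ^ (-((lam - (logb 2 3 - 1)) * n)) := by
  set m := ⌈(n : ℝ) * lam⌉₊
  have hthree : (3 : ℝ) ^ n = 2 ^ (logb 2 3 * n) := by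
    rw [rpow_mul zero_le_two, rpow_logb zero_lt_two (by norm_num) (by norm_num), rpow_natCast]
  have hceil : (n : ℝ) * lam ≤ m := Nat.le_ceil _
  calc gammaDRS lam n ≤ 1 / 2 ^ n * (3 ^ n / 2 ^ m) := by
        rw [gammaDRS_eq_sum_filter]
        exact mul_le_mul_of_nonneg_left (sum_choose_mul_two_pow_sub_one_le n m) (by positivity)
    _ = (2 : ℝ) ^ (logb 2 3 * n - (m + n)) := by
        rw [rpow_sub zero_lt_two, rpow_add zero_lt_two, rpow_natCast, rpow_natCast, hthree]
        ring
    _ ≤ (2 : ℝ) ^ (-((lam - (logb 2 3 - 1)) * n)) :=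
        rpow_le_rpow_of_exponent_le one_le_two (by nlinarith)

lemma tendsto_rpow_neg_mul_natCast_atTop {b c : ℝ} (h : 1 < b) (hc : 0 < c) :
    Tendsto (fun n : ℕ => b ^ (-(c * n))) atTop (𝓝 0) := by
  refine (tendsto_rpow_atBot_of_base_gt_one b h).comp ?_
  exact tendsto_neg_atTop_atBot.comp
    (tendsto_natCast_atTop_atTop.const_mul_atTop hc)

/-- For `λ > λ* = h_b(2/3) − 1/3`, the rate loss `γₙ` equals
`(1/2ⁿ) Σ_{i>⌈nλ⌉} C(n,i)(2^{i−⌈nλ⌉} − 1)`, tends to `0`, and decays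
exponentially in `n`. -/
theorem gammaDRS_tendsto_zero (lam : ℝ) (hlam : hb (2 / 3) - 1 / 3 < lam) :
    (∀ n : ℕ, gammaDRS lam n =
      (1 / 2 ^ n) * ∑ i ∈ (Finset.range (n + 1)).filter (fun i => ⌈(n : ℝ) * lam⌉₊ < i),
        (n.choose i : ℝ) * (2 ^ (i - ⌈(n : ℝ) * lam⌉₊) - 1)) ∧
    Tendsto (gammaDRS lam) atTop (nhds 0) ∧
    ∃ c > (0 : ℝ), ∀ᶠ n : ℕ in atTop, |gammaDRS lam n| ≤ (2 : ℝ) ^ (-(c * n)) := by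
  have hc : 0 < lam - (logb 2 3 - 1) := by
    rw [← hb_two_thirds_sub_one_third]
    linarith
  refine ⟨gammaDRS_eq_sum_filter lam, ?_, lam - (logb 2 3 - 1), hc, .of_forall fun n => ?_⟩
  · exact squeeze_zero (gammaDRS_nonneg lam) (gammaDRS_le_two_rpow lam)
      (tendsto_rpow_neg_mul_natCast_atTop one_lt_two hc)
  · rw [abs_of_nonneg (gammaDRS_nonneg lam n)]
    exact gammaDRS_le_two_rpow lam n
end

section
/- Let λ > 1/log₂ 3 ≈ 0.631 and let c > 0 be a constant. Then the sequence γ_C(n) := 4c·n·2^{n(1 − λ log₂ 3)} tends to 0 as n → ∞; more generally, Σ_{k=0}^{n−⌈nλ⌉} C(n−k, ⌈nλ⌉)·2^{2k} ≤ n·2^{n(2 − λ log₂ 3)} for all sufficiently large n, so its ratio to 2ⁿ vanishes exponentially. -/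
/-!
Each summand is bounded by a single term of a binomial expansion: `C(N, m)·3^m ≤ (3 + 1)^N = 4^N`,
so `C(n - k, m)·4^k ≤ 4^n / 3^m ≤ 4^n·3^{-nλ} = 2^{n(2 - λ log₂ 3)}`, and there are at most `n`
summands. After dividing by `2^n`, everything is `n·rⁿ` with `r = 2^{1 - λ log₂ 3} < 1`.
-/

open Filter Finset

theorem Nat.choose_mul_pow_le_add_one_pow (a N m : ℕ) : N.choose m * a ^ m ≤ (a + 1) ^ N := by
  rcases le_or_gt m N with hmN | hNm
  · rw [add_pow]
    calc N.choose m * a ^ m = a ^ m * 1 ^ (N - m) * N.choose m := by ring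
      _ ≤ ∑ j ∈ range (N + 1), a ^ j * 1 ^ (N - j) * N.choose j :=
        single_le_sum (f := fun j => a ^ j * 1 ^ (N - j) * N.choose j) (fun _ _ => Nat.zero_le _)
          (mem_range.mpr (Nat.lt_succ_of_le hmN))
  · simp [Nat.choose_eq_zero_of_lt hNm]

theorem Nat.choose_sub_mul_three_pow_mul_four_pow_le {n k : ℕ} (hk : k ≤ n) (m : ℕ) :
    (n - k).choose m * 3 ^ m * 4 ^ k ≤ 4 ^ n :=
  calc (n - k).choose m * 3 ^ m * 4 ^ k ≤ 4 ^ (n - k) * 4 ^ k :=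
        Nat.mul_le_mul_right _ (Nat.choose_mul_pow_le_add_one_pow 3 (n - k) m)
    _ = 4 ^ n := by rw [← pow_add, Nat.sub_add_cancel hk]

theorem sum_choose_sub_mul_four_pow_le (n m : ℕ) :
    ∑ k ∈ range (n - m + 1), ((n - k).choose m : ℝ) * 2 ^ (2 * k)
      ≤ (n - m + 1 : ℕ) * ((4 : ℝ) ^ n / 3 ^ m) := by
  calc ∑ k ∈ range (n - m + 1), ((n - k).choose m : ℝ) * 2 ^ (2 * k)
      ≤ ∑ _k ∈ range (n - m + 1), (4 : ℝ) ^ n / 3 ^ m := by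
        refine sum_le_sum fun k hk => ?_
        have hkn : k ≤ n := by have := mem_range.mp hk; omega
        rw [le_div_iff₀ (by positivity)]
        calc ((n - k).choose m : ℝ) * 2 ^ (2 * k) * 3 ^ m
            = (((n - k).choose m * 3 ^ m * 4 ^ k : ℕ) : ℝ) := by push_cast; rw [pow_mul]; ring
          _ ≤ 4 ^ n := by exact_mod_cast Nat.choose_sub_mul_three_pow_mul_four_pow_le hkn m
    _ = (n - m + 1 : ℕ) * ((4 : ℝ) ^ n / 3 ^ m) := by rw [sum_const, card_range, nsmul_eq_mul]

theorem Real.rpow_sub_mul_logb {b y : ℝ} (hb : 0 < b) (hb₁ : b ≠ 1) (hy : 0 < y) (s t : ℝ) :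
    b ^ (s - t * logb b y) = b ^ s / y ^ t := by
  rw [rpow_sub hb, mul_comm t, rpow_mul hb.le, rpow_logb hb hb₁ hy]

theorem four_pow_div_three_pow_ceil_le (n : ℕ) (lam : ℝ) :
    (4 : ℝ) ^ n / 3 ^ ⌈(n : ℝ) * lam⌉₊ ≤ 2 ^ ((n : ℝ) * (2 - lam * Real.logb 2 3)) := by
  rw [show (n : ℝ) * (2 - lam * Real.logb 2 3) = ((2 * n : ℕ) : ℝ) - n * lam * Real.logb 2 3 by
      push_cast; ring, Real.rpow_sub_mul_logb two_pos (by norm_num) three_pos, Real.rpow_natCast,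
    pow_mul, show (2 : ℝ) ^ 2 = 4 by norm_num, ← Real.rpow_natCast 3]
  exact div_le_div_of_nonneg_left (by positivity) (by positivity)
    (Real.rpow_le_rpow_of_exponent_le (by norm_num) (Nat.le_ceil _))

theorem tendsto_natCast_mul_rpow_mul_of_neg {b β : ℝ} (hb : 1 < b) (hβ : β < 0) :
    Tendsto (fun n : ℕ => (n : ℝ) * b ^ ((n : ℝ) * β)) atTop (nhds 0) := by
  simp_rw [mul_comm _ β, Real.rpow_mul (zero_le_one.trans hb.le), Real.rpow_natCast]
  exact tendsto_self_mul_const_pow_of_lt_one (by positivity)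
    (Real.rpow_lt_one_of_one_lt_of_neg hb hβ)

theorem adrs_overhead_vanishes_general (lam c : ℝ)
    (hlam : 1 / Real.logb 2 3 < lam) :
    Tendsto (fun n : ℕ => 4 * c * n * (2 : ℝ) ^ ((n : ℝ) * (1 - lam * Real.logb 2 3)))
      atTop (nhds 0) ∧
    (∀ᶠ n : ℕ in atTop,
      (∑ k ∈ Finset.range (n - ⌈(n : ℝ) * lam⌉₊ + 1),
          (((n - k).choose ⌈(n : ℝ) * lam⌉₊ : ℕ) : ℝ) * 2 ^ (2 * k))
        ≤ (n : ℝ) * (2 : ℝ) ^ ((n : ℝ) * (2 - lam * Real.logb 2 3))) ∧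
    Tendsto (fun n : ℕ =>
      (∑ k ∈ Finset.range (n - ⌈(n : ℝ) * lam⌉₊ + 1),
          (((n - k).choose ⌈(n : ℝ) * lam⌉₊ : ℕ) : ℝ) * 2 ^ (2 * k)) / 2 ^ n)
      atTop (nhds 0) := by
  set L := Real.logb 2 3
  have hL : 0 < L := Real.logb_pos one_lt_two (by norm_num)
  have hlamL : 1 < lam * L := by rwa [div_lt_iff₀ hL] at hlam
  have hlam₀ : 0 < lam := lt_trans (by positivity) hlam
  have hdecay := tendsto_natCast_mul_rpow_mul_of_neg one_lt_two (by linarith : 1 - lam * L < 0)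
  have hsum : ∀ᶠ n : ℕ in atTop,
      (∑ k ∈ Finset.range (n - ⌈(n : ℝ) * lam⌉₊ + 1),
          (((n - k).choose ⌈(n : ℝ) * lam⌉₊ : ℕ) : ℝ) * 2 ^ (2 * k))
        ≤ (n : ℝ) * (2 : ℝ) ^ ((n : ℝ) * (2 - lam * L)) := by
    filter_upwards [eventually_ge_atTop 1] with n hn
    have hm : 1 ≤ ⌈(n : ℝ) * lam⌉₊ := Nat.one_le_ceil_iff.mpr (by positivity)
    exact (sum_choose_sub_mul_four_pow_le n _).trans <|
      mul_le_mul (by exact_mod_cast (by omega : n - ⌈(n : ℝ) * lam⌉₊ + 1 ≤ n))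
        (four_pow_div_three_pow_ceil_le n lam) (by positivity) (by positivity)
  refine ⟨by simpa only [mul_assoc, mul_zero] using hdecay.const_mul (4 * c), hsum, ?_⟩
  refine squeeze_zero' (Eventually.of_forall fun n => by positivity) ?_ hdecay
  filter_upwards [hsum] with n hn
  rw [div_le_iff₀ (by positivity)]
  calc _ ≤ _ := hn
    _ = n * 2 ^ ((n : ℝ) * (1 - lam * L)) * 2 ^ n := by
      rw [mul_assoc, ← Real.rpow_natCast 2 n, ← Real.rpow_add two_pos]
      ring_nf

/-- For `λ > 1/log₂ 3` and `c > 0`, the bound `γ_C(n) = 4c·n·2^{n(1 − λ log₂ 3)}`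
tends to `0`; moreover `Σ_{k=0}^{n−⌈nλ⌉} C(n−k, ⌈nλ⌉)·2^{2k} ≤ n·2^{n(2 − λ log₂ 3)}`
for all sufficiently large `n`, so its ratio to `2ⁿ` vanishes. -/
theorem adrs_overhead_vanishes (lam c : ℝ) (hc : 0 < c)
    (hlam : 1 / Real.logb 2 3 < lam) :
    Tendsto (fun n : ℕ => 4 * c * n * (2 : ℝ) ^ ((n : ℝ) * (1 - lam * Real.logb 2 3)))
      atTop (nhds 0) ∧
    (∀ᶠ n : ℕ in atTop,
      (∑ k ∈ Finset.range (n - ⌈(n : ℝ) * lam⌉₊ + 1),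
          (((n - k).choose ⌈(n : ℝ) * lam⌉₊ : ℕ) : ℝ) * 2 ^ (2 * k))
        ≤ (n : ℝ) * (2 : ℝ) ^ ((n : ℝ) * (2 - lam * Real.logb 2 3))) ∧
    Tendsto (fun n : ℕ =>
      (∑ k ∈ Finset.range (n - ⌈(n : ℝ) * lam⌉₊ + 1),
          (((n - k).choose ⌈(n : ℝ) * lam⌉₊ : ℕ) : ℝ) * 2 ^ (2 * k)) / 2 ^ n)
      atTop (nhds 0) :=
  adrs_overhead_vanishes_general lam c hlam
end
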